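/- arXiv:1607.00945 — 2 statements merged into one kernel-verified Lean document; each statement's English description precedes it below -/
import Mathlib

section
/- For any connected graph G on n vertices, the treedepth of G is at most (treewidth of G + 1) · log₂(n + 1). -/
/-- `r u v` means "`u` is an ancestor of `v` or equal to `v`" in a rooted forest:
a partial order in which the set of ancestors of any element forms a chain. -/
def IsForestOrder {V : Type*} (r : V → V → Prop) : Prop :=
  (∀ v, r v v) ∧ (∀ u v w, r u v → r v w → r u w) ∧ (∀ u v, r u v → r v u → u = v) ∧
    (∀ u v w, r u w → r v w → (r u v ∨ r v u))

/-- The height of the forest is at most `h`: every chain has at most `h` vertices. -/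
def ForestHeightLE {V : Type*} (r : V → V → Prop) (h : ℕ) : Prop :=
  ∀ s : Finset V, (∀ u ∈ s, ∀ v ∈ s, r u v ∨ r v u) → s.card ≤ h

/-- `G` has treedepth at most `h`. -/
def TreedepthLE {V : Type*} (G : SimpleGraph V) (h : ℕ) : Prop :=
  ∃ r : V → V → Prop, IsForestOrder r ∧ (∀ u v, G.Adj u v → (r u v ∨ r v u)) ∧
    ForestHeightLE r h

/-- `(T, bags)` is a tree decomposition of `G`. -/
def IsTreeDecomp {V : Type*} {ι : Type*} (G : SimpleGraph V) (T : SimpleGraph ι)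
    (bags : ι → Finset V) : Prop :=
  T.Connected ∧ T.IsAcyclic ∧
    (∀ v : V, ∃ i, v ∈ bags i) ∧
    (∀ u v : V, G.Adj u v → ∃ i, u ∈ bags i ∧ v ∈ bags i) ∧
    (∀ v : V, (SimpleGraph.induce {i : ι | v ∈ bags i} T).Connected)

/-- `G` has treewidth at most `w`: it has a tree decomposition of width at most `w`. -/
def TreewidthLE {V : Type*} (G : SimpleGraph V) (w : ℕ) : Prop :=
  ∃ (ι : Type) (T : SimpleGraph ι) (bags : ι → Finset V),
    IsTreeDecomp G T bags ∧ ∀ i, (bags i).card ≤ w + 1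

/-!
A tree decomposition of width `w` has a balanced bag: deleting its at most `w + 1` vertices
leaves components with at most half of the vertices each. Such a bag is found by walking in the
tree towards the side that carries more than half of the vertices; the walk cannot go on forever.
An elimination forest is then built with the balanced bag on top, as a chain, and the forests of
the components, obtained by induction, below it. Treewidth does not grow under taking induced
subgraphs, so every halving of the number of vertices costs at most `w + 1` levels.
-/

open Function SimpleGraph

section ForestOrder

variable {α β : Type*}

theorem IsForestOrder.comap {r : β → β → Prop} (hr : IsForestOrder r) {f : α → β}
    (hf : Injective f) : IsForestOrder (r on f) := by
  obtain ⟨hrefl, htrans, hanti, hchain⟩ := hr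
  exact ⟨fun v => hrefl _, fun u v w => htrans _ _ _, fun u v huv hvu => hf (hanti _ _ huv hvu),
    fun u v w => hchain _ _ _⟩

theorem ForestHeightLE.comap {r : β → β → Prop} {h : ℕ} (hr : ForestHeightLE r h) {f : α → β}
    (hf : Injective f) : ForestHeightLE (r on f) h := fun s hs => by
  simpa using hr (s.map ⟨f, hf⟩) (by simpa using hs)

theorem IsForestOrder.sumLex [LinearOrder α] {r : β → β → Prop} (hr : IsForestOrder r) :
    IsForestOrder (Sum.Lex (α := α) (· ≤ ·) r) := by
  obtain ⟨hrefl, htrans, hanti, hchain⟩ := hr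
  refine ⟨?_, ?_, ?_, ?_⟩
  · rintro (a | b)
    exacts [.inl le_rfl, .inr (hrefl b)]
  · rintro _ _ _ (hab | hab | _) (hbc | hbc | _)
    exacts [.inl (hab.trans hbc), .sep _ _, .inr (htrans _ _ _ hab hbc), .sep _ _]
  · rintro _ _ (hab | hab | _) (hba | hba | _)
    exacts [congrArg _ (le_antisymm hab hba), congrArg _ (hanti _ _ hab hba)]
  · rintro (a | a) (b | b) _ (hac | hac | _) (hbc | hbc | _)
    exacts [(le_total a b).imp .inl .inl, (le_total a b).imp .inl .inl, .inl (.sep _ _),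
      .inr (.sep _ _), (hchain _ _ _ hac hbc).imp .inr .inr]

theorem ForestHeightLE.sumLex [Fintype α] (l : α → α → Prop) {r : β → β → Prop} {h : ℕ}
    (hr : ForestHeightLE r h) : ForestHeightLE (Sum.Lex l r) (Fintype.card α + h) := by
  intro s hs
  rw [← s.card_toLeft_add_card_toRight]
  gcongr
  · exact Finset.card_le_univ _
  · exact hr _ fun a ha b hb => by
      simpa using hs _ (Finset.mem_toRight.1 ha) _ (Finset.mem_toRight.1 hb)

theorem IsForestOrder.sigmaLex {κ : Type*} {α : κ → Type*} {r : ∀ k, α k → α k → Prop}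
    (hr : ∀ k, IsForestOrder (r k)) : IsForestOrder (Sigma.Lex ⊥ r) := by
  refine ⟨fun ⟨k, a⟩ => .right _ _ ((hr k).1 a), ?_, ?_, ?_⟩
  · rintro _ _ _ (⟨_, _, ⟨⟩⟩ | ⟨a, b, hab⟩) (⟨_, _, ⟨⟩⟩ | ⟨_, c, hbc⟩)
    exact .right _ _ ((hr _).2.1 a b c hab hbc)
  · rintro _ _ (⟨_, _, ⟨⟩⟩ | ⟨a, b, hab⟩) (⟨_, _, ⟨⟩⟩ | ⟨_, _, hba⟩)
    rw [(hr _).2.2.1 a b hab hba]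
  · rintro _ _ _ (⟨_, _, ⟨⟩⟩ | ⟨a, c, hac⟩) (⟨_, _, ⟨⟩⟩ | ⟨b, _, hbc⟩)
    exact ((hr _).2.2.2 a b c hac hbc).imp (.right _ _) (.right _ _)

theorem ForestHeightLE.sigmaLex {κ : Type*} {α : κ → Type*} {r : ∀ k, α k → α k → Prop} {h : ℕ}
    (hr : ∀ k, ForestHeightLE (r k) h) : ForestHeightLE (Sigma.Lex ⊥ r) h := by
  intro s hs
  obtain rfl | ⟨⟨k, a⟩, ha⟩ := s.eq_empty_or_nonempty
  · simp
  have hfiber : ∀ x ∈ s, x.1 = k := fun x hx => by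
    rcases hs x hx _ ha with (⟨_, _, ⟨⟩⟩ | ⟨_, _, _⟩) | (⟨_, _, ⟨⟩⟩ | ⟨_, _, _⟩) <;> rfl
  classical
  calc s.card = (s.preimage (Sigma.mk k) sigma_mk_injective.injOn).card := by
        rw [Finset.card_preimage, Finset.filter_true_of_mem]
        rintro ⟨_, b⟩ hb
        obtain rfl := hfiber _ hb
        exact ⟨b, rfl⟩
    _ ≤ h := hr k _ fun a ha b hb => by
        simpa [Sigma.lex_iff] using hs _ (Finset.mem_preimage.1 ha) _ (Finset.mem_preimage.1 hb)

end ForestOrder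

section Treedepth

variable {V : Type*} {G : SimpleGraph V} {h : ℕ}

theorem TreedepthLE.mono {h' : ℕ} (hG : TreedepthLE G h) (hh : h ≤ h') : TreedepthLE G h' :=
  let ⟨r, hr, hadj, hheight⟩ := hG
  ⟨r, hr, hadj, fun s hs => (hheight s hs).trans hh⟩

theorem TreedepthLE.of_induce_compl (S : Finset V) (hS : TreedepthLE (G.induce (↑S : Set V)ᶜ) h) :
    TreedepthLE G (S.card + h) := by
  classical
  obtain ⟨r, hr, hadj, hheight⟩ := hS
  let e : V ≃ Fin S.card ⊕ ↥(↑S : Set V)ᶜ :=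
    (Equiv.Set.sumCompl (↑S : Set V)).symm.trans (Equiv.sumCongr S.equivFin (Equiv.refl _))
  refine ⟨Sum.Lex (· ≤ ·) r on e, hr.sumLex.comap e.injective, ?_,
    by simpa using (hheight.sumLex _).comap e.injective⟩
  intro u v huv
  obtain ⟨x, rfl⟩ := e.symm.surjective u
  obtain ⟨y, rfl⟩ := e.symm.surjective v
  simp only [onFun, Equiv.apply_symm_apply]
  rcases x with a | a <;> rcases y with b | b
  · simp [le_total]
  · simp [Sum.Lex.sep]
  · simp [Sum.Lex.sep]
  · simpa using hadj a b huv

theorem TreedepthLE.of_forall_fiber {κ : Type*} (c : V → κ) (hc : ∀ u v, G.Adj u v → c u = c v)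
    (hfiber : ∀ k, TreedepthLE (G.induce {v | c v = k}) h) : TreedepthLE G h := by
  choose r hr hadj hheight using hfiber
  let e := Equiv.sigmaFiberEquiv c
  refine ⟨Sigma.Lex ⊥ r on e.symm, (IsForestOrder.sigmaLex hr).comap e.symm.injective, ?_,
    (ForestHeightLE.sigmaLex hheight).comap e.symm.injective⟩
  intro u v huv
  obtain ⟨⟨k, a, ha⟩, rfl⟩ := e.surjective u
  obtain ⟨⟨k', b, hb⟩, rfl⟩ := e.surjective v
  obtain rfl : k = k' := ha.symm.trans ((hc a b huv).trans hb)
  simpa only [onFun, Equiv.symm_apply_apply] using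
    (hadj k ⟨a, ha⟩ ⟨b, hb⟩ huv).imp (fun h => .right _ _ h) (fun h => .right _ _ h)

end Treedepth

namespace SimpleGraph

variable {ι : Type*} {T : SimpleGraph ι} {i j k a x : ι}

/-- For a tree `T`, the node set of the component of `T - i` containing `j`. -/
def branch (T : SimpleGraph ι) (i j : ι) : Set ι :=
  {x | ∃ p : T.Walk j x, i ∉ p.support}

theorem not_mem_branch_self : x ∉ T.branch i i := fun ⟨p, hp⟩ => hp p.start_mem_support

theorem branch_subset_of_mem (hk : k ∈ T.branch i j) : T.branch i k ⊆ T.branch i j := by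
  obtain ⟨p, hp⟩ := hk
  rintro x ⟨q, hq⟩
  refine ⟨p.append q, ?_⟩
  rw [Walk.mem_support_append_iff]
  exact not_or.2 ⟨hp, hq⟩

theorem Reachable.exists_adj_branch_subset (hij : T.Reachable i j) (hne : j ≠ i) :
    ∃ j', T.Adj i j' ∧ T.branch i j ⊆ T.branch i j' := by
  obtain ⟨p, hp⟩ := hij.exists_isPath
  cases p with
  | nil => exact absurd rfl hne
  | cons h q => exact ⟨_, h, branch_subset_of_mem ⟨q, ((Walk.cons_isPath_iff h q).1 hp).2⟩⟩

namespace IsAcyclic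

variable (hT : T.IsAcyclic)
include hT

theorem exists_eq_cons_of_mem_branch (hij : T.Adj i j) (hx : x ∈ T.branch i j)
    {p : T.Walk i x} (hp : p.IsPath) : ∃ q : T.Walk j x, p = .cons hij q := by
  classical
  obtain ⟨q, hq⟩ := hx
  have hpath : (Walk.cons hij q.bypass).IsPath :=
    q.bypass_isPath.cons fun h => hq (q.support_bypass_subset_support h)
  exact ⟨q.bypass, congrArg Subtype.val ((hT.subsingleton_path _ _).elim ⟨p, hp⟩ ⟨_, hpath⟩)⟩

theorem not_mem_branch (hjk : T.Adj j k) (hji : T.Adj j i) (hik : i ≠ k) :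
    i ∉ T.branch j k := fun hi => by
  obtain ⟨q, hq⟩ := hT.exists_eq_cons_of_mem_branch hjk hi (Path.singleton hji).2
  exact hik (by simpa using congrArg (·.getVert 1) hq)

theorem disjoint_branch (hij : T.Adj i j) : Disjoint (T.branch i j) (T.branch j i) := by
  classical
  refine Set.disjoint_left.2 fun x hx ⟨q, hq⟩ => ?_
  obtain ⟨r, hr⟩ := hT.exists_eq_cons_of_mem_branch hij hx q.bypass_isPath
  exact hq (q.support_bypass_subset_support (hr ▸ by simp))

theorem branch_subset_branch (hij : T.Adj i j) (hjk : T.Adj j k) (hki : k ≠ i) :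
    T.branch j k ⊆ T.branch i j := by
  classical
  rintro x ⟨q, hq⟩
  have hi : i ∉ q.support := fun hi =>
    hT.not_mem_branch hjk hij.symm hki.symm
      ⟨q.takeUntil i hi, fun h => hq (q.support_takeUntil_subset_support hi h)⟩
  exact ⟨.cons hjk q, by simpa [hij.ne] using hi⟩

theorem dist_lt_of_mem_branch (hij : T.Adj i j) (ha : a ∈ T.branch i j) :
    T.dist j a < T.dist i a := by
  obtain ⟨q₀, -⟩ := id ha
  obtain ⟨p, hp, hlen⟩ := (Walk.cons hij q₀).reachable.exists_path_of_dist
  obtain ⟨q, rfl⟩ := hT.exists_eq_cons_of_mem_branch hij ha hp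
  rw [← hlen, Walk.length_cons]
  exact Nat.lt_succ_of_le (dist_le q)

end IsAcyclic

end SimpleGraph

theorem TreewidthLE.induce {V : Type*} {G : SimpleGraph V} {w : ℕ} (hw : TreewidthLE G w)
    (s : Set V) : TreewidthLE (G.induce s) w := by
  classical
  obtain ⟨ι, T, bags, ⟨hconn, hacyc, hcover, hedge, hsub⟩, hwidth⟩ := hw
  refine ⟨ι, T, fun i => (bags i).subtype (· ∈ s), ⟨hconn, hacyc, fun v => ?_, fun u v huv => ?_,
    fun v => ?_⟩, fun i => ?_⟩
  · simpa using hcover v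
  · simpa using hedge u v huv
  · have hbags : {i | v ∈ (bags i).subtype (· ∈ s)} = {i | ↑v ∈ bags i} := by ext; simp
    exact hbags ▸ hsub v
  · exact (Finset.card_subtype _ _).trans_le ((Finset.card_filter_le _ _).trans (hwidth i))

def verticesBeyond {V ι : Type*} (T : SimpleGraph ι) (bags : ι → Finset V) (i j : ι) : Set V :=
  {v | v ∉ bags i ∧ ∀ b, v ∈ bags b → b ∈ T.branch i j}

theorem verticesBeyond_mono {V ι : Type*} {T : SimpleGraph ι} {bags : ι → Finset V} {i j j' : ι}
    (h : T.branch i j ⊆ T.branch i j') : verticesBeyond T bags i j ⊆ verticesBeyond T bags i j' :=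
  fun _ ⟨hv, hbags⟩ => ⟨hv, fun b hb => h (hbags b hb)⟩

namespace IsTreeDecomp

variable {V ι : Type*} {G : SimpleGraph V} {T : SimpleGraph ι} {bags : ι → Finset V}
  {i j k a b : ι}

theorem mem_branch_of_mem_bags (htd : IsTreeDecomp G T bags) {v : V} (ha : v ∈ bags a)
    (hb : v ∈ bags b) (hi : v ∉ bags i) : b ∈ T.branch i a := by
  obtain ⟨p⟩ := (htd.2.2.2.2 v).preconnected ⟨a, ha⟩ ⟨b, hb⟩
  refine ⟨p.map (Embedding.induce _).toHom, fun h => ?_⟩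
  obtain ⟨x, -, rfl⟩ := List.mem_map.1 ((Walk.support_map _ _) ▸ h)
  exact hi x.2

theorem mem_branch_of_walk (htd : IsTreeDecomp G T bags) {u v : ↥(↑(bags i) : Set V)ᶜ}
    (p : (G.induce (↑(bags i) : Set V)ᶜ).Walk u v) (ha : ↑u ∈ bags a) (hb : ↑v ∈ bags b) :
    b ∈ T.branch i a := by
  induction p generalizing a with
  | @nil x => exact htd.mem_branch_of_mem_bags ha hb x.2
  | @cons x y z huv _ ih =>
    obtain ⟨c, hu, hv⟩ := htd.2.2.2.1 _ _ huv
    exact branch_subset_of_mem (htd.mem_branch_of_mem_bags ha hu x.2) (ih hv hb)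

theorem exists_adj_verticesBeyond_subset (htd : IsTreeDecomp G T bags)
    (hne : (verticesBeyond T bags i j).Nonempty) :
    ∃ j', T.Adj i j' ∧ verticesBeyond T bags i j ⊆ verticesBeyond T bags i j' := by
  obtain ⟨v, -, hbags⟩ := hne
  obtain ⟨b, hb⟩ := htd.2.2.1 v
  have hji : j ≠ i := by
    rintro rfl
    exact not_mem_branch_self (hbags b hb)
  obtain ⟨j', hij', hsub⟩ := (htd.1.preconnected i j).exists_adj_branch_subset hji
  exact ⟨j', hij', verticesBeyond_mono hsub⟩

theorem disjoint_verticesBeyond (htd : IsTreeDecomp G T bags) (hij : T.Adj i j) :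
    Disjoint (verticesBeyond T bags i j) (verticesBeyond T bags j i) := by
  refine Set.disjoint_left.2 fun v ⟨_, hij'⟩ ⟨_, hji'⟩ => ?_
  obtain ⟨b, hb⟩ := htd.2.2.1 v
  exact Set.disjoint_left.1 (htd.2.1.disjoint_branch hij) (hij' b hb) (hji' b hb)

theorem verticesBeyond_subset (htd : IsTreeDecomp G T bags) (hij : T.Adj i j) (hjk : T.Adj j k)
    (hki : k ≠ i) : verticesBeyond T bags j k ⊆ verticesBeyond T bags i j :=
  fun _ ⟨_, hbags⟩ =>
    ⟨fun hi => htd.2.1.not_mem_branch hjk hij.symm hki.symm (hbags i hi),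
      fun b hb => htd.2.1.branch_subset_branch hij hjk hki (hbags b hb)⟩

theorem mem_verticesBeyond_of_reachable (htd : IsTreeDecomp G T bags)
    {u v : ↥(↑(bags i) : Set V)ᶜ} (huv : (G.induce (↑(bags i) : Set V)ᶜ).Reachable u v)
    (ha : ↑u ∈ bags a) : ↑v ∈ verticesBeyond T bags i a :=
  ⟨v.2, fun _ hb => htd.mem_branch_of_walk huv.some ha hb⟩

theorem verticesBeyond_subset_of_two_mul_ncard_gt [Finite V] (htd : IsTreeDecomp G T bags)
    (hij : T.Adj i j) (hjk : T.Adj j k)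
    (hi : Nat.card V < 2 * (verticesBeyond T bags i j).ncard)
    (hj : Nat.card V < 2 * (verticesBeyond T bags j k).ncard) :
    verticesBeyond T bags j k ⊆ verticesBeyond T bags i j := by
  refine htd.verticesBeyond_subset hij hjk ?_
  -- otherwise both sides of the edge `ij` would hold more than half of the vertices
  rintro rfl
  have := Set.ncard_union_eq (htd.disjoint_verticesBeyond hij)
  have := Set.ncard_le_card (verticesBeyond T bags k j ∪ verticesBeyond T bags j k)
  omega

theorem exists_forall_two_mul_ncard_verticesBeyond_le [Finite V] (htd : IsTreeDecomp G T bags) :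
    ∃ i, ∀ j, 2 * (verticesBeyond T bags i j).ncard ≤ Nat.card V := by
  set n := Nat.card V
  by_contra! hheavy
  have hnext : ∀ i, ∃ j, T.Adj i j ∧ n < 2 * (verticesBeyond T bags i j).ncard := fun i => by
    obtain ⟨j, hj⟩ := hheavy i
    obtain ⟨j', hij', hsub⟩ :=
      htd.exists_adj_verticesBeyond_subset
        (Set.nonempty_of_ncard_ne_zero (s := verticesBeyond T bags i j) (by omega))
    exact ⟨j', hij', hj.trans_le (Nat.mul_le_mul_left 2 (Set.ncard_le_ncard hsub))⟩
  -- Walk along edges `ij` whose `verticesBeyond` holds more than half of the vertices: that set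
  -- shrinks, and while it stays the same the walk approaches a bag `a` of one of its vertices.
  suffices ∀ N i j, T.Adj i j → n < 2 * (verticesBeyond T bags i j).ncard →
      (verticesBeyond T bags i j).ncard = N → False by
    obtain ⟨i⟩ := htd.1.nonempty
    obtain ⟨j, hij, hj⟩ := hnext i
    exact this _ i j hij hj rfl
  intro N
  induction N using Nat.strong_induction_on with | _ N ihN => ?_
  intro i j hij hj hN
  obtain ⟨v, hv⟩ := Set.nonempty_of_ncard_ne_zero (s := verticesBeyond T bags i j) (by omega)
  obtain ⟨a, ha⟩ := htd.2.2.1 v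
  suffices ∀ d i j, T.Adj i j → n < 2 * (verticesBeyond T bags i j).ncard →
      (verticesBeyond T bags i j).ncard = N → v ∈ verticesBeyond T bags i j → T.dist j a = d →
      False from this _ i j hij hj hN hv rfl
  intro d
  induction d using Nat.strong_induction_on with | _ d ihd => ?_
  intro i j hij hj hN hv hd
  obtain ⟨k, hjk, hk⟩ := hnext j
  have hsub := htd.verticesBeyond_subset_of_two_mul_ncard_gt hij hjk hj hk
  rcases (Set.ncard_le_ncard hsub).lt_or_eq with hlt | heq
  · exact ihN _ (hN ▸ hlt) j k hjk hk rfl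
  · have hvk : v ∈ verticesBeyond T bags j k := by
      rwa [Set.eq_of_subset_of_ncard_le hsub heq.ge]
    exact ihd _ (hd ▸ htd.2.1.dist_lt_of_mem_branch hjk (hvk.2 a ha)) j k hjk hk (heq ▸ hN) hvk rfl

theorem exists_forall_two_mul_card_supp_le [Finite V] (htd : IsTreeDecomp G T bags) :
    ∃ i, ∀ C : (G.induce (↑(bags i) : Set V)ᶜ).ConnectedComponent,
      2 * Nat.card C.supp ≤ Nat.card V := by
  obtain ⟨i, hi⟩ := htd.exists_forall_two_mul_ncard_verticesBeyond_le
  refine ⟨i, fun C => ?_⟩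
  obtain ⟨u, rfl⟩ := C.exists_rep
  obtain ⟨a, ha⟩ := htd.2.2.1 u
  have hsub : Subtype.val '' ((G.induce (↑(bags i) : Set V)ᶜ).connectedComponentMk u).supp ⊆
      verticesBeyond T bags i a := by
    rintro _ ⟨v, hv, rfl⟩
    exact htd.mem_verticesBeyond_of_reachable (ConnectedComponent.exact hv).symm ha
  calc 2 * Nat.card _ = 2 * (Subtype.val '' _).ncard := by
        rw [Set.ncard_image_of_injective _ Subtype.val_injective, Nat.card_coe_set_eq]
        rfl
    _ ≤ 2 * (verticesBeyond T bags i a).ncard :=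
        Nat.mul_le_mul_left 2 (Set.ncard_le_ncard hsub)
    _ ≤ Nat.card V := hi a

end IsTreeDecomp

theorem Nat.clog_two_succ_lt_of_two_mul_le {m n : ℕ} (hn : 0 < n) (hmn : 2 * m ≤ n) :
    Nat.clog 2 (m + 1) < Nat.clog 2 (n + 1) := by
  rw [Nat.clog_of_two_le (n := n + 1) one_lt_two (by omega)]
  exact Nat.succ_le_succ (Nat.clog_mono_right _ (by omega))

theorem treedepthLE_of_treewidthLE {V : Type*} [Finite V] {G : SimpleGraph V} {w : ℕ}
    (hw : TreewidthLE G w) : TreedepthLE G ((w + 1) * Nat.clog 2 (Nat.card V + 1)) := by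
  induction hn : Nat.card V using Nat.strong_induction_on generalizing V with | _ n ih => ?_
  obtain ⟨ι, T, bags, htd, hwidth⟩ := id hw
  obtain ⟨i, hi⟩ := htd.exists_forall_two_mul_card_supp_le
  set S := bags i
  have hcomp : TreedepthLE (G.induce (↑S : Set V)ᶜ) ((w + 1) * (Nat.clog 2 (n + 1) - 1)) := by
    refine .of_forall_fiber _ (fun _ _ => ConnectedComponent.connectedComponentMk_eq_of_adj)
      fun C => ?_
    show TreedepthLE ((G.induce (↑S : Set V)ᶜ).induce C.supp) _
    have hC : 0 < Nat.card C.supp := Nat.card_pos_iff.2 ⟨C.nonempty_supp.to_subtype, inferInstance⟩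
    have hCn := hn ▸ hi C
    refine (ih _ (by omega) ((hw.induce _).induce _) rfl).mono ?_
    have := Nat.clog_two_succ_lt_of_two_mul_le (by omega) hCn
    gcongr
    omega
  refine (hcomp.of_induce_compl S).mono ?_
  have hSw : S.card ≤ w + 1 := hwidth i
  have hSn : S.card ≤ n := hn ▸ (Set.ncard_coe_finset S).symm.trans_le (Set.ncard_le_card _)
  rcases n.eq_zero_or_pos with rfl | hpos
  · simpa using hSn
  obtain ⟨c, hc⟩ := Nat.exists_eq_add_one.2 (Nat.clog_pos one_lt_two (by omega : 2 ≤ n + 1))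
  rw [hc, Nat.add_sub_cancel, Nat.mul_succ]
  omega

theorem treedepth_le_treewidth_mul_log_general {V : Type*} [Fintype V]
    (G : SimpleGraph V) (w : ℕ) (hw : TreewidthLE G w) :
    TreedepthLE G ((w + 1) * Nat.clog 2 (Fintype.card V + 1)) := by
  simpa only [Nat.card_eq_fintype_card] using treedepthLE_of_treewidthLE hw

/-- For a connected graph `G` on `n` vertices,
`td(G) ≤ (tw(G) + 1) · ⌈log₂ (n + 1)⌉`. -/
theorem treedepth_le_treewidth_mul_log {V : Type*} [Fintype V] [DecidableEq V]
    (G : SimpleGraph V) (hG : G.Connected) (w : ℕ) (hw : TreewidthLE G w) :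
    TreedepthLE G ((w + 1) * Nat.clog 2 (Fintype.card V + 1)) :=
  treedepth_le_treewidth_mul_log_general G w hw
end

section
/- Let U be a set of size at most t², let S₁,…,S_l be disjoint blocks, and for each block S_i let cost_i : U → ℕ ∪ {∞} assign an extra cost to each subtree. Suppose an assignment σ maps each block to a distinct element of U minimizing the total cost ∑_i cost_i(σ(i)). Then there is such an optimal injective assignment in which each σ(i) is among the l elements of U with the l smallest values of cost_i. Hence keeping only the best l ≤ t values per block suffices to find a minimum-cost injective assignment. -/
/-!
Induct on the number of blocks `i` with `σ i ∉ B i`. For such a block, `B i` has at least `l`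
elements and misses `σ i`, so some `u ∈ B i` is used by no block at all. Reassigning block `i`
to `u` keeps the assignment injective, does not increase the cost (every element of `B i` is at
least as cheap for block `i` as every element outside it), and removes `i` from the bad blocks.
Optimality of `σ` then turns the resulting inequality of costs into an equality.
-/

open Finset

section Exchange

variable {ι U M : Type*} [Fintype ι] [DecidableEq U]

def misplaced (B : ι → Finset U) (σ : ι ↪ U) : Finset ι :=
  {i | σ i ∉ B i}

theorem exists_mem_notMem_range_of_card_le (σ : ι ↪ U) {B : Finset U} (hB : Fintype.card ι ≤ #B)
    {i : ι} (hi : σ i ∉ B) : ∃ u ∈ B, u ∉ Set.range σ := by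
  by_contra! hsub
  have hBsub : B ⊆ (univ.map σ).erase (σ i) := fun u hu => by
    obtain ⟨j, rfl⟩ := hsub u hu
    exact mem_erase.2 ⟨ne_of_mem_of_not_mem hu hi, mem_map_of_mem σ (mem_univ j)⟩
  have := card_le_card hBsub
  rw [card_erase_of_mem (mem_map_of_mem σ (mem_univ i)), card_map, card_univ] at this
  have : 0 < Fintype.card ι := Fintype.card_pos_iff.2 ⟨i⟩
  omega

variable [AddCommMonoid M] [PartialOrder M] [IsOrderedAddMonoid M]
  {c : ι → U → M} {B : ι → Finset U}

theorem exists_sum_le_card_misplaced_lt (hB : ∀ i, Fintype.card ι ≤ #(B i))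
    (hBmin : ∀ i, ∀ u ∈ B i, ∀ u' ∉ B i, c i u ≤ c i u') (σ : ι ↪ U) {i : ι}
    (hi : σ i ∉ B i) :
    ∃ τ : ι ↪ U, ∑ j, c j (τ j) ≤ ∑ j, c j (σ j) ∧ #(misplaced B τ) < #(misplaced B σ) := by
  classical
  obtain ⟨u, huB, hur⟩ := exists_mem_notMem_range_of_card_le σ (hB i) hi
  have hτ : ∀ j ≠ i, σ.setValue i u j = σ j := fun j hj =>
    Function.Embedding.setValue_eq_of_ne hj fun h => hur ⟨j, h⟩
  refine ⟨σ.setValue i u, sum_le_sum fun j _ => ?_, card_lt_card ⟨fun j hj => ?_, ?_⟩⟩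
  · by_cases hj : j = i
    · subst hj
      rw [Function.Embedding.setValue_eq]
      exact hBmin j u huB _ hi
    · rw [hτ j hj]
  · have hji : j ≠ i := by
      rintro rfl
      simp [misplaced, Function.Embedding.setValue_eq, huB] at hj
    simpa [misplaced, hτ j hji] using hj
  · intro hsub
    have hiτ := hsub (show i ∈ misplaced B σ by simpa [misplaced] using hi)
    simp [misplaced, Function.Embedding.setValue_eq, huB] at hiτ

theorem exists_forall_mem_sum_le (hB : ∀ i, Fintype.card ι ≤ #(B i))
    (hBmin : ∀ i, ∀ u ∈ B i, ∀ u' ∉ B i, c i u ≤ c i u') (σ : ι ↪ U) :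
    ∃ τ : ι ↪ U, (∀ i, τ i ∈ B i) ∧ ∑ i, c i (τ i) ≤ ∑ i, c i (σ i) := by
  induction h : #(misplaced B σ) using Nat.strong_induction_on generalizing σ with
  | _ n ih =>
    by_cases hall : ∀ i, σ i ∈ B i
    · exact ⟨σ, hall, le_rfl⟩
    obtain ⟨i, hi⟩ := not_forall.1 hall
    obtain ⟨τ, hτσ, hlt⟩ := exists_sum_le_card_misplaced_lt hB hBmin σ hi
    obtain ⟨ρ, hρB, hρτ⟩ := ih _ (h ▸ hlt) τ rfl
    exact ⟨ρ, hρB, hρτ.trans hτσ⟩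

end Exchange

theorem keep_best_l_values_general {U : Type*} [Fintype U] [DecidableEq U] (l : ℕ)
    (cost : Fin l → U → ℕ∞) (σ : Fin l ↪ U)
    (hopt : ∀ τ : Fin l ↪ U, ∑ i, cost i (σ i) ≤ ∑ i, cost i (τ i))
    (B : Fin l → Finset U)
    (hBcard : ∀ i, (B i).card = min l (Fintype.card U))
    (hBmin : ∀ i, ∀ u ∈ B i, ∀ u' ∉ B i, cost i u ≤ cost i u') :
    ∃ σ' : Fin l ↪ U, (∀ i, σ' i ∈ B i) ∧
      ∑ i, cost i (σ' i) = ∑ i, cost i (σ i) := by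
  have hlU : l ≤ Fintype.card U := by simpa using Fintype.card_le_of_embedding σ
  have hB : ∀ i, Fintype.card (Fin l) ≤ #(B i) := fun i => by simp [hBcard i, hlU]
  obtain ⟨τ, hτB, hτσ⟩ := exists_forall_mem_sum_le hB hBmin σ
  exact ⟨τ, hτB, le_antisymm hτσ (hopt τ)⟩

/-- The table-pruning rule of the polynomial-space branching algorithm: if `σ` is an
injective assignment of blocks to subtrees minimizing the total extra cost, and for each
block `i` the set `B i` consists of `min l |U|` subtrees with the smallest costs for
block `i`, then there is an optimal injective assignment choosing, for each block,
a subtree from `B i`. -/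
theorem keep_best_l_values {U : Type*} [Fintype U] [DecidableEq U] (t l : ℕ)
    (hU : Fintype.card U ≤ t ^ 2) (hl : l ≤ t)
    (cost : Fin l → U → ℕ∞) (σ : Fin l ↪ U)
    (hopt : ∀ τ : Fin l ↪ U, ∑ i, cost i (σ i) ≤ ∑ i, cost i (τ i))
    (B : Fin l → Finset U)
    (hBcard : ∀ i, (B i).card = min l (Fintype.card U))
    (hBmin : ∀ i, ∀ u ∈ B i, ∀ u' ∉ B i, cost i u ≤ cost i u') :
    ∃ σ' : Fin l ↪ U, (∀ i, σ' i ∈ B i) ∧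
      ∑ i, cost i (σ' i) = ∑ i, cost i (σ i) :=
  keep_best_l_values_general l cost σ hopt B hBcard hBmin
end
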